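/- Let $k$ be an $n$-dimensional Calderón–Zygmund kernel with size bound $|k(x,y)| \leq c|x-y|^{-n}$, let $\Phi$ be a nonnegative $1$-Lipschitz function on $\mathbb{R}^d$, and let $k_\Phi(x,y) = k(x,y)/(1 + k(x,y)^2 \Phi(x)^n \Phi(y)^n)$ be the suppressed kernel. Then for every $x, y \in \mathbb{R}^d$ with $x \neq y$, $|k_\Phi(x,y) - k(x,y)| \leq C \Phi(x)^n / |x-y|^{2n}$, where $C$ depends only on $n$ and $c$. -/

import Mathlib

/-!
Writing `A = k(x,y)² Φ(x)ⁿ Φ(y)ⁿ`, one has `k_Φ - k = -A k_Φ`, so it suffices to bound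
`Φ(y)ⁿ |k_Φ(x,y)|` by a constant. If `Φ(y) ≤ 2|x-y|` this follows from `|k_Φ| ≤ |k| ≤ c |x-y|⁻ⁿ`.
Otherwise the Lipschitz bound gives `Φ(y) ≤ 2Φ(x)`, so `A ≥ 2⁻ⁿ (Φ(y)ⁿ |k|)²` and the suppression
factor `1 + A` absorbs `Φ(y)ⁿ |k|`.
-/

namespace SuppressedKernel

lemma div_one_add_sub_self {t s : ℝ} (hs : 1 + s ≠ 0) : t / (1 + s) - t = -(s * (t / (1 + s))) := by
  field_simp
  ring

lemma abs_div_one_add_le {t s : ℝ} (hs : 0 ≤ s) : |t / (1 + s)| ≤ |t| := by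
  rw [abs_div, abs_of_pos (show 0 < 1 + s by linarith)]
  exact div_le_self (abs_nonneg t) (by linarith)

lemma mul_abs_le_mul_one_add {t a b M : ℝ} (hb : 0 ≤ b) (hM : 1 ≤ M)
    (hba : b ≤ M * a) : b * |t| ≤ M * (1 + t ^ 2 * a * b) := by
  have hamgm : b * |t| ≤ 1 + t ^ 2 * b * b := by
    have hu : t ^ 2 * b * b = (b * |t|) ^ 2 := by rw [mul_pow, sq_abs]; ring
    rw [hu]
    nlinarith [sq_nonneg (b * |t| - 1), mul_nonneg hb (abs_nonneg t)]
  have hsq : t ^ 2 * b * b ≤ M * (t ^ 2 * a * b) := by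
    nlinarith [mul_le_mul_of_nonneg_left hba (mul_nonneg (sq_nonneg t) hb)]
  nlinarith

lemma mul_abs_div_le {t a b M : ℝ} (ha : 0 ≤ a) (hb : 0 ≤ b) (hM : 1 ≤ M) (hba : b ≤ M * a) :
    b * |t / (1 + t ^ 2 * a * b)| ≤ M := by
  have hpos : 0 < 1 + t ^ 2 * a * b := by positivity
  rw [abs_div, abs_of_pos hpos, ← mul_div_assoc, div_le_iff₀ hpos]
  exact mul_abs_le_mul_one_add hb hM hba

variable {X : Type*} [MetricSpace X] {Φ : X → ℝ} {x y : X} {n : ℕ} {c t : ℝ}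

theorem pow_mul_abs_suppressed_le (hΦ0 : ∀ x, 0 ≤ Φ x) (hΦ : LipschitzWith 1 Φ) (hxy : x ≠ y)
    (ht : |t| ≤ c / dist x y ^ n) :
    Φ y ^ n * |t / (1 + t ^ 2 * Φ x ^ n * Φ y ^ n)| ≤ 2 ^ n * (c + 1) := by
  have hr : 0 < dist x y ^ n := pow_pos (dist_pos.mpr hxy) n
  have hc : 0 ≤ c := by
    have := mul_nonneg ((abs_nonneg t).trans ht) hr.le
    rwa [div_mul_cancel₀ c hr.ne'] at this
  rcases le_or_gt (Φ y) (2 * dist x y) with hnear | hfar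
  · calc Φ y ^ n * |t / (1 + t ^ 2 * Φ x ^ n * Φ y ^ n)|
        ≤ (2 * dist x y) ^ n * (c / dist x y ^ n) := by
          gcongr
          · exact hΦ0 y
          · exact (abs_div_one_add_le (by positivity [hΦ0 x, hΦ0 y])).trans ht
      _ = 2 ^ n * c := by rw [mul_pow]; field_simp
      _ ≤ 2 ^ n * (c + 1) := by gcongr; linarith
  · have hΦyx : Φ y ≤ 2 * Φ x := by
      have := hΦ.dist_le_mul y x
      rw [NNReal.coe_one, one_mul, Real.dist_eq, dist_comm] at this
      linarith [le_abs_self (Φ y - Φ x)]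
    have hpow : Φ y ^ n ≤ 2 ^ n * Φ x ^ n := by
      rw [← mul_pow]; exact pow_le_pow_left₀ (hΦ0 y) hΦyx n
    calc _ ≤ (2 : ℝ) ^ n :=
          mul_abs_div_le (pow_nonneg (hΦ0 x) n) (pow_nonneg (hΦ0 y) n) (one_le_pow₀ one_le_two) hpow
      _ ≤ 2 ^ n * (c + 1) := le_mul_of_one_le_right (by positivity) (by linarith)

theorem abs_suppressed_sub_le (hΦ0 : ∀ x, 0 ≤ Φ x) (hΦ : LipschitzWith 1 Φ) (hxy : x ≠ y)
    (ht : |t| ≤ c / dist x y ^ n) :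
    |t / (1 + t ^ 2 * Φ x ^ n * Φ y ^ n) - t| ≤
      c ^ 2 * 2 ^ n * (c + 1) * Φ x ^ n / dist x y ^ (2 * n) := by
  have hA : 0 ≤ t ^ 2 * Φ x ^ n * Φ y ^ n := by positivity [hΦ0 x, hΦ0 y]
  have ht2 : t ^ 2 ≤ c ^ 2 / dist x y ^ (2 * n) := by
    rw [← sq_abs, mul_comm 2 n, pow_mul, ← div_pow]
    exact pow_le_pow_left₀ (abs_nonneg t) ht 2
  rw [div_one_add_sub_self (by linarith), abs_neg, abs_mul, abs_of_nonneg hA]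
  calc t ^ 2 * Φ x ^ n * Φ y ^ n * |t / (1 + t ^ 2 * Φ x ^ n * Φ y ^ n)|
      = t ^ 2 * Φ x ^ n * (Φ y ^ n * |t / (1 + t ^ 2 * Φ x ^ n * Φ y ^ n)|) := by ring
    _ ≤ c ^ 2 / dist x y ^ (2 * n) * Φ x ^ n * (2 ^ n * (c + 1)) :=
      mul_le_mul (mul_le_mul_of_nonneg_right ht2 (pow_nonneg (hΦ0 x) n))
        (pow_mul_abs_suppressed_le hΦ0 hΦ hxy ht) (by positivity [hΦ0 y])
        (by positivity [hΦ0 x])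
    _ = c ^ 2 * 2 ^ n * (c + 1) * Φ x ^ n / dist x y ^ (2 * n) := by ring

end SuppressedKernel

theorem stmt2_general (d n : ℕ) (c : ℝ) (hc : 0 < c)
    (k : EuclideanSpace ℝ (Fin d) → EuclideanSpace ℝ (Fin d) → ℝ)
    (hsize : ∀ x y, x ≠ y → |k x y| ≤ c / dist x y ^ n)
    (Φ : EuclideanSpace ℝ (Fin d) → ℝ) (hΦ0 : ∀ x, 0 ≤ Φ x)
    (hΦlip : LipschitzWith 1 Φ)
    (kΦ : EuclideanSpace ℝ (Fin d) → EuclideanSpace ℝ (Fin d) → ℝ)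
    (hkΦ : ∀ x y, kΦ x y = k x y / (1 + k x y ^ 2 * Φ x ^ n * Φ y ^ n)) :
    ∃ C > 0, ∀ x y, x ≠ y →
      |kΦ x y - k x y| ≤ C * Φ x ^ n / dist x y ^ (2 * n) := by
  refine ⟨c ^ 2 * 2 ^ n * (c + 1), by positivity, fun x y hxy => ?_⟩
  rw [hkΦ]
  exact SuppressedKernel.abs_suppressed_sub_le hΦ0 hΦlip hxy (hsize x y hxy)

/-- Difference between the suppressed kernel and the original kernel:
`|k_Φ(x,y) - k(x,y)| ≤ C Φ(x)ⁿ / |x-y|^{2n}`. -/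
theorem stmt2 (d n : ℕ) (hn : 1 ≤ n) (c : ℝ) (hc : 0 < c)
    (k : EuclideanSpace ℝ (Fin d) → EuclideanSpace ℝ (Fin d) → ℝ)
    (hanti : ∀ x y, x ≠ y → k y x = -k x y)
    (hsize : ∀ x y, x ≠ y → |k x y| ≤ c / dist x y ^ n)
    (hreg : ∀ x x' y, x ≠ y → x' ≠ y → dist x x' ≤ dist x y / 2 →
      |k x y - k x' y| ≤ c * dist x x' / dist x y ^ (n + 1))
    (Φ : EuclideanSpace ℝ (Fin d) → ℝ) (hΦ0 : ∀ x, 0 ≤ Φ x)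
    (hΦlip : LipschitzWith 1 Φ)
    (kΦ : EuclideanSpace ℝ (Fin d) → EuclideanSpace ℝ (Fin d) → ℝ)
    (hkΦ : ∀ x y, kΦ x y = k x y / (1 + k x y ^ 2 * Φ x ^ n * Φ y ^ n)) :
    ∃ C > 0, ∀ x y, x ≠ y →
      |kΦ x y - k x y| ≤ C * Φ x ^ n / dist x y ^ (2 * n) :=
  stmt2_general d n c hc k hsize Φ hΦ0 hΦlip kΦ hkΦ
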